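/- Enumeration reducibility embeds into s-reducibility via finite subsets: for all sets A, B ⊆ ℕ, A ≤_e B if and only if A* ≤_s B*, where for any set X ⊆ ℕ, X* denotes the set of canonical indices of all finite subsets of X. -/

import Mathlib

/-!
An e-operator `Φ` induces an s-operator on canonical indices: enumerate the axiom `⟨G, {H}⟩`
whenever every `x ∈ G` has an axiom `⟨x, F⟩ ∈ Φ` with `F ⊆ H`. Since `H ∈ B*` iff `H ⊆ B`,
and the union of the chosen `F` is a single finite subset of `B`, this operator sends `B*` to
`(Φ B)*`. Conversely `x ∈ A` iff `{x} ∈ A*`, and an s-axiom for `{x}` is either `⟨{x}, ∅⟩` or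
`⟨{x}, {H}⟩`, which we read as the e-axiom `⟨x, ∅⟩` or `⟨x, H⟩`.

Both operators are c.e. because the canonical indices of finite sets are exactly the codes of
strictly increasing lists, a primitive recursive property, so the finite sets involved can be
guessed as witnesses of a `Σ₁` definition.
-/

/-- A set `S ⊆ ℕ` is computably enumerable (c.e.) if it is the domain of a
partial computable function. -/
def CE (S : Set ℕ) : Prop := ∃ f : ℕ →. ℕ, Partrec f ∧ S = f.Dom

/-- Application of an operator, given as a set `Φ ⊆ ℕ` of coded axioms
`⟨x, F⟩` (coded via `Nat.pair` and the canonical index `Encodable.encode F`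
of the finite set `F`), to a set `X`:
`Φ(X) = {x : ∃ F, ⟨x, F⟩ ∈ Φ and F ⊆ X}`. -/
def evalOp (Φ : Set ℕ) (X : Set ℕ) : Set ℕ :=
  {x | ∃ F : Finset ℕ, Nat.pair x (Encodable.encode F) ∈ Φ ∧ ↑F ⊆ X}

/-- `Φ` is an s-operator: a c.e. set of axioms `⟨x, F⟩` where each `F` is
empty or a singleton. -/
def IsSOp (Φ : Set ℕ) : Prop :=
  CE Φ ∧ ∀ (x : ℕ) (F : Finset ℕ), Nat.pair x (Encodable.encode F) ∈ Φ → F.card ≤ 1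

/-- `A` is s-reducible to `B`. -/
def SRed (A B : Set ℕ) : Prop := ∃ Φ : Set ℕ, IsSOp Φ ∧ A = evalOp Φ B
/-- `A` is enumeration reducible to `B`: witnessed by a c.e. set of axioms
`⟨x, F⟩` with `F` an arbitrary finite set. -/
def ERed (A B : Set ℕ) : Prop := ∃ Φ : Set ℕ, CE Φ ∧ A = evalOp Φ B

/-- `X*` is the set of canonical indices of finite subsets of `X`. -/
def finStar (X : Set ℕ) : Set ℕ :=
  {n | ∃ F : Finset ℕ, n = Encodable.encode F ∧ ↑F ⊆ X}


open Encodable Denumerable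

theorem CE.exists_primrecRel {S : Set ℕ} (h : CE S) :
    ∃ R : ℕ → ℕ → Prop, PrimrecRel R ∧ ∀ y, y ∈ S ↔ ∃ k, R y k := by
  obtain ⟨f, hf, rfl⟩ := h
  obtain ⟨c, rfl⟩ := Nat.Partrec.Code.exists_code.1 (Partrec.nat_iff.1 hf)
  refine ⟨fun y k => (c.evaln k y).isSome, ?_, fun y => ?_⟩
  · exact Primrec.eq.comp (Primrec.option_isSome.comp (Nat.Partrec.Code.primrec_evaln.comp
      ((Primrec.snd.pair (Primrec.const c)).pair Primrec.fst))) (Primrec.const true)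
  · simp only [PFun.mem_dom, Nat.Partrec.Code.evaln_complete, Option.isSome_iff_exists]
    exact exists_comm

theorem ce_of_primrecRel {β : Type*} [Primcodable β] {R : ℕ → β → Prop} (hR : PrimrecRel R) :
    CE {y | ∃ b, R y b} := by
  classical
  have hfound : Primrec₂ fun y n => (decode (α := β) n).elim false fun b => decide (R y b) :=
    (Primrec.option_casesOn (Primrec.decode.comp Primrec.snd) (Primrec.const false)
      (hR.decide.comp (Primrec.fst.comp Primrec.fst) Primrec.snd).to₂).of_eq
      fun p => by dsimp only; cases decode (α := β) p.2 <;> rfl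
  refine ⟨fun y => Nat.rfind fun n => Part.some _,
    Partrec.rfind hfound.to_comp.partrec₂, Set.ext fun y => ?_⟩
  show _ ↔ (Nat.rfind _).Dom
  refine Iff.trans ?_ (Nat.rfind_dom (p := fun n => Part.some _)).symm
  simp only [Part.mem_some_iff, Part.some_dom, implies_true, and_true]
  constructor
  · rintro ⟨b, hb⟩
    exact ⟨encode b, by simp [hb]⟩
  · rintro ⟨n, hn⟩
    cases h : decode (α := β) n with
    | none => simp [h] at hn
    | some b => exact ⟨b, by simpa [h] using hn.symm⟩

open Primrec in
theorem PrimrecRel.list_pairwise {α : Type*} [Primcodable α] {R : α → α → Prop}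
    (hR : PrimrecRel R) : PrimrecPred (List.Pairwise R) := by
  classical
  have hstep : Primrec₂ fun (_ : List α) (p : α × List α × Bool) =>
      decide (∀ b ∈ p.2.1, R p.1 b) && p.2.2 :=
    Primrec.and.comp
      (hR.swap.forall_mem_list.decide.comp (fst.comp (snd.comp snd)) (fst.comp snd))
      (snd.comp (snd.comp snd))
  refine Primrec.primrecPred ((Primrec.list_rec Primrec.id (Primrec.const true) hstep).of_eq
    fun l => ?_)
  induction l with
  | nil => simp
  | cons a l ih => simp_all [List.pairwise_cons]

theorem List.forall_mem_exists_iff_exists_list {α β : Type*} {l : List α} {P : α → β → Prop} :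
    (∀ a ∈ l, ∃ b, P a b) ↔ ∃ w : List β, ∀ a ∈ l, ∃ b ∈ w, P a b := by
  refine ⟨fun h => ?_, fun ⟨w, hw⟩ a ha => (hw a ha).imp fun _ => And.right⟩
  induction l with
  | nil => exact ⟨[], by simp⟩
  | cons a l ih =>
    obtain ⟨b, hb⟩ := h a List.mem_cons_self
    obtain ⟨w, hw⟩ := ih fun x hx => h x (List.mem_cons_of_mem a hx)
    refine ⟨b :: w, ?_⟩
    simp only [List.mem_cons, forall_eq_or_imp, exists_eq_or_imp]
    exact ⟨Or.inl hb, fun x hx => Or.inr (hw x hx)⟩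

theorem primrecRel_list_subset {α : Type*} [Primcodable α] :
    PrimrecRel ((· ⊆ ·) : List α → List α → Prop) :=
  (Primrec.eq.exists_mem_list.swap.forall_mem_list).of_eq fun l l' => by
    simp [List.subset_def]

theorem primrecPred_sortedLT : PrimrecPred (List.SortedLT : List ℕ → Prop) :=
  Primrec.nat_lt.list_pairwise.of_eq fun _ => List.sortedLT_iff_pairwise.symm

theorem encode_finset_eq_encode_sort (F : Finset ℕ) : encode F = encode F.sort := by
  show encodeMultiset F.1 = _
  unfold encodeMultiset
  congr 1

theorem encode_toFinset {l : List ℕ} (hl : l.SortedLT) : encode l.toFinset = encode l := by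
  rw [encode_finset_eq_encode_sort,
    (List.toFinset_sort (· ≤ ·) hl.nodup).2 (hl.pairwise.imp le_of_lt)]

theorem encode_finset_singleton (m : ℕ) : encode ({m} : Finset ℕ) = encode [m] := by
  rw [encode_finset_eq_encode_sort, Finset.sort_singleton]

theorem encode_mem_finStar {F : Finset ℕ} {X : Set ℕ} : encode F ∈ finStar X ↔ ↑F ⊆ X :=
  ⟨fun ⟨_, hG, hGX⟩ => encode_injective hG ▸ hGX, fun h => ⟨F, rfl, h⟩⟩

theorem encode_singleton_mem_finStar {x : ℕ} {X : Set ℕ} :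
    encode ({x} : Finset ℕ) ∈ finStar X ↔ x ∈ X := by
  simp [encode_mem_finStar]

def finStarOp (Φ : Set ℕ) : Set ℕ :=
  {y | ∃ G H : Finset ℕ, y = Nat.pair (encode G) (encode ({encode H} : Finset ℕ)) ∧
    ∀ x ∈ G, ∃ F ⊆ H, Nat.pair x (encode F) ∈ Φ}

theorem evalOp_finStarOp (Φ B : Set ℕ) :
    evalOp (finStarOp Φ) (finStar B) = finStar (evalOp Φ B) := by
  ext z
  constructor
  · rintro ⟨S, ⟨G, H, hz, hGH⟩, hSB⟩
    obtain ⟨rfl, hS⟩ := Nat.pair_eq_pair.1 hz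
    obtain rfl := encode_injective hS
    have hHB : ↑H ⊆ B := encode_mem_finStar.1 (hSB (Finset.mem_singleton_self _))
    refine encode_mem_finStar.2 fun x hx => ?_
    obtain ⟨F, hFH, hF⟩ := hGH x hx
    exact ⟨F, hF, (Finset.coe_subset.2 hFH).trans hHB⟩
  · rintro ⟨G, rfl, hGA⟩
    have hax : ∀ x ∈ G, ∃ F : Finset ℕ, Nat.pair x (encode F) ∈ Φ ∧ ↑F ⊆ B := fun x hx => hGA hx
    choose! F hF hFB using hax
    refine ⟨{encode (G.biUnion F)}, ⟨G, G.biUnion F, rfl, fun x hx => ?_⟩, ?_⟩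
    · exact ⟨F x, Finset.subset_biUnion_of_mem F hx, hF x hx⟩
    · simpa [encode_mem_finStar] using hFB

theorem mem_finStarOp_iff {Φ : Set ℕ} {R : ℕ → ℕ → Prop} (hΦ : ∀ z, z ∈ Φ ↔ ∃ k, R z k)
    (y : ℕ) :
    y ∈ finStarOp Φ ↔ ∃ lG lH : List ℕ, ∃ w : List (List ℕ × ℕ),
      lG.SortedLT ∧ lH.SortedLT ∧ y = Nat.pair (encode lG) (encode [encode lH]) ∧
      ∀ x ∈ lG, ∃ p ∈ w, p.1.SortedLT ∧ p.1 ⊆ lH ∧ R (Nat.pair x (encode p.1)) p.2 := by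
  have haxiom : ∀ (H : Finset ℕ) x, (∃ F ⊆ H, Nat.pair x (encode F) ∈ Φ) ↔
      ∃ p : List ℕ × ℕ, p.1.SortedLT ∧ p.1 ⊆ H.sort ∧ R (Nat.pair x (encode p.1)) p.2 := by
    intro H x
    constructor
    · rintro ⟨F, hFH, hF⟩
      obtain ⟨k, hk⟩ := (hΦ _).1 hF
      refine ⟨(F.sort, k), F.sortedLT_sort, fun a ha => ?_, ?_⟩
      · simpa using hFH (by simpa using ha)
      · rwa [← encode_finset_eq_encode_sort]
    · rintro ⟨⟨l, k⟩, hl, hlH, hk⟩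
      refine ⟨l.toFinset, fun a ha => ?_, ?_⟩
      · simpa using hlH (List.mem_toFinset.1 ha)
      · rw [encode_toFinset hl]
        exact (hΦ _).2 ⟨k, hk⟩
  constructor
  · rintro ⟨G, H, rfl, hGH⟩
    obtain ⟨w, hw⟩ := List.forall_mem_exists_iff_exists_list.1 fun x (hx : x ∈ G.sort) =>
      (haxiom H x).1 (hGH x (Finset.mem_sort _ |>.1 hx))
    refine ⟨G.sort, H.sort, w, G.sortedLT_sort, H.sortedLT_sort, ?_, hw⟩
    rw [encode_finset_eq_encode_sort G, encode_finset_singleton, encode_finset_eq_encode_sort H]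
  · rintro ⟨lG, lH, w, hG, hH, rfl, hw⟩
    refine ⟨lG.toFinset, lH.toFinset, ?_, fun x hx => (haxiom _ x).2 ?_⟩
    · rw [encode_toFinset hG, encode_finset_singleton, encode_toFinset hH]
    · obtain ⟨p, -, hp⟩ := hw x (List.mem_toFinset.1 hx)
      refine ⟨p, hp.1, fun a ha => ?_, hp.2.2⟩
      simpa using hp.2.1 ha

open Primrec in
theorem ce_finStarOp {Φ : Set ℕ} (hΦ : CE Φ) : CE (finStarOp Φ) := by
  obtain ⟨R, hR, hΦR⟩ := hΦ.exists_primrecRel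
  have hcovers : PrimrecRel fun (p : List ℕ × ℕ) (xlH : ℕ × List ℕ) =>
      p.1.SortedLT ∧ p.1 ⊆ xlH.2 ∧ R (Nat.pair xlH.1 (encode p.1)) p.2 :=
    (primrecPred_sortedLT.comp (fst.comp fst)).and
      ((primrecRel_list_subset.comp (fst.comp fst) (snd.comp snd)).and
        (hR.comp (Primrec₂.natPair.comp (fst.comp snd) (Primrec.encode.comp (fst.comp fst)))
          (snd.comp fst)))
  have hcovered : PrimrecRel fun x (yq : ℕ × List ℕ × List ℕ × List (List ℕ × ℕ)) =>
      ∃ p ∈ yq.2.2.2, p.1.SortedLT ∧ p.1 ⊆ yq.2.2.1 ∧ R (Nat.pair x (encode p.1)) p.2 :=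
    hcovers.exists_mem_list.comp (snd.comp (snd.comp (snd.comp snd)))
      (fst.pair (fst.comp (snd.comp (snd.comp snd))))
  have hcond : PrimrecRel fun y (q : List ℕ × List ℕ × List (List ℕ × ℕ)) =>
      q.1.SortedLT ∧ q.2.1.SortedLT ∧ y = Nat.pair (encode q.1) (encode [encode q.2.1]) ∧
      ∀ x ∈ q.1, ∃ p ∈ q.2.2, p.1.SortedLT ∧ p.1 ⊆ q.2.1 ∧ R (Nat.pair x (encode p.1)) p.2 :=
    (primrecPred_sortedLT.comp (fst.comp snd)).and
      ((primrecPred_sortedLT.comp (fst.comp (snd.comp snd))).and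
        ((Primrec.eq.comp fst (Primrec₂.natPair.comp (Primrec.encode.comp (fst.comp snd))
          (Primrec.encode.comp (list_cons.comp (Primrec.encode.comp (fst.comp (snd.comp snd)))
            (const []))))).and
          (hcovered.forall_mem_list.comp (fst.comp snd) Primrec.id)))
  convert ce_of_primrecRel hcond using 1
  ext y
  simp only [mem_finStarOp_iff hΦR, Prod.exists, Set.mem_ofPred_eq]

theorem isSOp_finStarOp {Φ : Set ℕ} (hΦ : CE Φ) : IsSOp (finStarOp Φ) := by
  refine ⟨ce_finStarOp hΦ, fun _ S ⟨_, _, hS, _⟩ => ?_⟩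
  rw [encode_injective (Nat.pair_eq_pair.1 hS).2, Finset.card_singleton]

/-- In the first case every `⟨x, m⟩` becomes an axiom, which is harmless because `⟨x, ∅⟩` is one. -/
def singletonOp (Ψ : Set ℕ) : Set ℕ :=
  {y | Nat.pair (encode ({y.unpair.1} : Finset ℕ)) (encode (∅ : Finset ℕ)) ∈ Ψ ∨
    Nat.pair (encode ({y.unpair.1} : Finset ℕ)) (encode ({y.unpair.2} : Finset ℕ)) ∈ Ψ}

open Primrec in
theorem ce_singletonOp {Ψ : Set ℕ} (hΨ : CE Ψ) : CE (singletonOp Ψ) := by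
  obtain ⟨R, hR, hΨR⟩ := hΨ.exists_primrecRel
  have hsingleton : Primrec fun m : ℕ => encode ({m} : Finset ℕ) :=
    (Primrec.encode.comp (list_cons.comp Primrec.id (const []))).of_eq fun m =>
      (encode_finset_singleton m).symm
  have hcond : PrimrecRel fun (y : ℕ) k =>
      R (Nat.pair (encode ({y.unpair.1} : Finset ℕ)) (encode (∅ : Finset ℕ))) k ∨
      R (Nat.pair (encode ({y.unpair.1} : Finset ℕ)) (encode ({y.unpair.2} : Finset ℕ))) k :=
    (hR.comp (Primrec₂.natPair.comp (hsingleton.comp (fst.comp (unpair.comp fst))) (const _))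
      snd).or
    (hR.comp (Primrec₂.natPair.comp (hsingleton.comp (fst.comp (unpair.comp fst)))
      (hsingleton.comp (snd.comp (unpair.comp fst)))) snd)
  convert ce_of_primrecRel hcond using 1
  ext y
  simp only [singletonOp, hΨR, exists_or, Set.mem_ofPred_eq]

theorem mem_evalOp_singletonOp {Ψ : Set ℕ}
    (hΨ : ∀ x (S : Finset ℕ), Nat.pair x (encode S) ∈ Ψ → S.card ≤ 1) (B : Set ℕ) (x : ℕ) :
    x ∈ evalOp (singletonOp Ψ) B ↔ encode ({x} : Finset ℕ) ∈ evalOp Ψ (finStar B) := by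
  constructor
  · rintro ⟨F, hF | hF, hFB⟩ <;> simp only [Nat.unpair_pair] at hF
    · exact ⟨∅, hF, by simp⟩
    · exact ⟨{encode F}, hF, by simpa [encode_mem_finStar] using hFB⟩
  · rintro ⟨S, hS, hSB⟩
    obtain rfl | ⟨m, rfl⟩ : S = ∅ ∨ ∃ m, S = {m} := by
      rcases Nat.le_one_iff_eq_zero_or_eq_one.1 (hΨ _ _ hS) with h | h
      · exact Or.inl (Finset.card_eq_zero.1 h)
      · exact Or.inr (Finset.card_eq_one.1 h)
    · exact ⟨∅, Or.inl (by simpa using hS), by simp⟩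
    · obtain ⟨F, rfl, hFB⟩ := hSB (Finset.mem_singleton_self m)
      exact ⟨F, Or.inr (by simpa using hS), hFB⟩

/-- Enumeration reducibility embeds into s-reducibility via finite subsets:
`A ≤ₑ B ↔ A* ≤ₛ B*`. -/
theorem stmt8 : ∀ A B : Set ℕ, ERed A B ↔ SRed (finStar A) (finStar B) := by
  intro A B
  constructor
  · rintro ⟨Φ, hΦ, rfl⟩
    exact ⟨finStarOp Φ, isSOp_finStarOp hΦ, (evalOp_finStarOp Φ B).symm⟩
  · rintro ⟨Ψ, ⟨hΨ, hcard⟩, hAB⟩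
    refine ⟨singletonOp Ψ, ce_singletonOp hΨ, Set.ext fun x => ?_⟩
    rw [mem_evalOp_singletonOp hcard, ← hAB, encode_singleton_mem_finStar]
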